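/- arXiv:2512.16039 — 2 statements merged into one kernel-verified Lean document; each statement's English description precedes it below -/
import Mathlib

section
/- Let H be a finitely generated group with trivial center, A a finitely generated abelian group, and φ the automorphism of H × A given by φ(h, a) = (ψ(h), α(h)·a), where ψ is an automorphism of H and α : H → A is a homomorphism (i.e. the A-component automorphism γ is the identity). Then Fix φ = (Fix ψ ∩ ker α) × A; in particular, Fix φ is finitely generated if and only if the kernel of the restriction of α to Fix ψ is finitely generated, and in that case Fix ψ is itself finitely generated. -/
/-! Finite generation passes to subgroups of finitely generated abelian groups (they are
Noetherian `ℤ`-modules) and to extensions. Since `φ (h, a) = (h, a)` means `ψ h = h` and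
`α h = 1`, the fixed subgroup is `(Fix ψ ⊓ ker α) × A`, which is finitely generated exactly when
`Fix ψ ⊓ ker α` is; and `Fix ψ` is then an extension of a subgroup of `A` by `Fix ψ ⊓ ker α`. -/

/-- The subgroup of fixed points of an automorphism `φ` of `G`:
`Fix φ = {g ∈ G | φ(g) = g}`. -/
def fixedSubgroup {G : Type*} [Group G] (φ : G ≃* G) : Subgroup G where
  carrier := {g | φ g = g}
  one_mem' := map_one φ
  mul_mem' := by
    intro a b ha hb
    simp only [Set.mem_setOf_eq, map_mul] at *
    rw [ha, hb]
  inv_mem' := by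
    intro a ha
    simp only [Set.mem_setOf_eq, map_inv] at *
    rw [ha]

open Subgroup

theorem MulEquiv.groupFG_iff {G G' : Type*} [Group G] [Group G'] (e : G ≃* G') :
    Group.FG G ↔ Group.FG G' :=
  ⟨fun _ ↦ Group.fg_of_surjective (f := e.toMonoidHom) e.surjective,
    fun _ ↦ Group.fg_of_surjective (f := e.symm.toMonoidHom) e.symm.surjective⟩

theorem Subgroup.prod_fg_iff {G G' : Type*} [Group G] [Group G'] (H : Subgroup G)
    (K : Subgroup G') : (H.prod K).FG ↔ H.FG ∧ K.FG := by
  refine ⟨fun h ↦ ?_, fun h ↦ h.1.prod h.2⟩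
  simp only [← Group.fg_iff_subgroup_fg] at h ⊢
  have := (H.prodEquiv K).groupFG_iff.mp h
  exact ⟨Group.fg_of_surjective (f := MonoidHom.fst H K) Prod.fst_surjective,
    Group.fg_of_surjective (f := MonoidHom.snd H K) Prod.snd_surjective⟩

theorem Subgroup.fg_of_commGroup {A : Type*} [CommGroup A] [Group.FG A] (B : Subgroup A) :
    B.FG := by
  have : IsNoetherian ℤ (Additive A) := isNoetherian_of_isNoetherianRing_of_finite ℤ _
  rw [fg_iff_add_fg]
  exact (Submodule.fg_iff_addSubgroup_fg B.toAddSubgroup.toIntSubmodule).mp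
    (IsNoetherian.noetherian _)

theorem Group.fg_of_fg_ker_of_fg_range {G Q : Type*} [Group G] [Group Q] (f : G →* Q)
    (hker : f.ker.FG) (hrange : f.range.FG) : Group.FG G := by
  obtain ⟨T, -, hT, hTclosure⟩ : ∃ T ⊆ Set.univ, T.Finite ∧ closure (f '' T) = f.range := by
    refine Set.exists_subset_image_finite_and (p := fun S ↦ Subgroup.closure S = f.range) |>.mp ?_
    obtain ⟨T, hTclosure, hT⟩ := (Subgroup.fg_iff _).mp hrange
    refine ⟨T, fun t ht ↦ ?_, hT, hTclosure⟩
    simpa [← MonoidHom.coe_range, ← hTclosure] using subset_closure ht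
  have hcodisjoint : Codisjoint (closure T) f.ker := by
    rw [← map_eq_range_iff, MonoidHom.map_closure, hTclosure]
  rw [Group.fg_def, ← codisjoint_iff.mp hcodisjoint]
  exact ((Subgroup.fg_iff _).mpr ⟨T, rfl, hT⟩).sup hker

theorem MonoidHom.fg_ker_comp_subtype_iff {G Q : Type*} [Group G] [Group Q] (f : G →* Q)
    (H : Subgroup G) : Group.FG (f.comp H.subtype).ker ↔ (H ⊓ f.ker).FG := by
  change Group.FG (f.domRestrict H).ker ↔ _
  rw [ker_domRestrict, ((f.ker.subgroupOf H).equivMapOfInjective _ H.subtype_injective).groupFG_iff,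
    subgroupOf_map_subtype, inf_comm, Group.fg_iff_subgroup_fg]

theorem mem_fixedSubgroup {G : Type*} [Group G] {φ : G ≃* G} {g : G} :
    g ∈ fixedSubgroup φ ↔ φ g = g :=
  Iff.rfl

theorem fixedSubgroup_eq_prod {H A : Type*} [Group H] [CommGroup A] (ψ : H ≃* H) (α : H →* A)
    (φ : (H × A) ≃* (H × A)) (hφ : ∀ (h : H) (a : A), φ (h, a) = (ψ h, α h * a)) :
    fixedSubgroup φ = (fixedSubgroup ψ ⊓ α.ker).prod ⊤ := by
  ext ⟨h, a⟩
  simp [mem_fixedSubgroup, hφ, mem_prod]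

theorem fixed_of_gamma_id_general {H A : Type*} [Group H] [CommGroup A]
    (hA : Group.FG A)
    (ψ : H ≃* H) (α : H →* A) (φ : (H × A) ≃* (H × A))
    (hφ : ∀ (h : H) (a : A), φ (h, a) = (ψ h, α h * a)) :
    fixedSubgroup φ = (fixedSubgroup ψ ⊓ MonoidHom.ker α).prod (⊤ : Subgroup A) ∧
    (Group.FG ↥(fixedSubgroup φ) ↔
      Group.FG ↥(MonoidHom.ker (α.comp (fixedSubgroup ψ).subtype))) ∧
    (Group.FG ↥(fixedSubgroup φ) → Group.FG ↥(fixedSubgroup ψ)) := by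
  have hfix := fixedSubgroup_eq_prod ψ α φ hφ
  have hiff : Group.FG (fixedSubgroup φ) ↔
      Group.FG (α.comp (fixedSubgroup ψ).subtype).ker := by
    rw [Group.fg_iff_subgroup_fg, hfix, Subgroup.prod_fg_iff, MonoidHom.fg_ker_comp_subtype_iff,
      ← Group.fg_def, and_iff_left hA]
  refine ⟨hfix, hiff, fun hfg ↦ ?_⟩
  exact Group.fg_of_fg_ker_of_fg_range (α.comp (fixedSubgroup ψ).subtype)
    ((Group.fg_iff_subgroup_fg _).mp (hiff.mp hfg)) (Subgroup.fg_of_commGroup _)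

/-- For `φ(h,a) = (ψ(h), α(h)·a)` on `H × A` (so `γ = id`),
`Fix φ = (Fix ψ ∩ ker α) × A`; in particular `Fix φ` is finitely generated iff the
kernel of the restriction of `α` to `Fix ψ` is, and in that case `Fix ψ` is finitely
generated. -/
theorem fixed_of_gamma_id {H A : Type*} [Group H] [CommGroup A]
    (hHfg : Group.FG H) (hZ : Subgroup.center H = ⊥) (hA : Group.FG A)
    (ψ : H ≃* H) (α : H →* A) (φ : (H × A) ≃* (H × A))
    (hφ : ∀ (h : H) (a : A), φ (h, a) = (ψ h, α h * a)) :
    fixedSubgroup φ = (fixedSubgroup ψ ⊓ MonoidHom.ker α).prod (⊤ : Subgroup A) ∧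
    (Group.FG ↥(fixedSubgroup φ) ↔
      Group.FG ↥(MonoidHom.ker (α.comp (fixedSubgroup ψ).subtype))) ∧
    (Group.FG ↥(fixedSubgroup φ) → Group.FG ↥(fixedSubgroup ψ)) :=
  fixed_of_gamma_id_general hA ψ α φ hφ
end

section
/- Let H be a finitely generated group with trivial center, A a finitely generated abelian group, and φ the automorphism of H × A given by φ(h, a) = (ψ(h), α(h)·a⁻¹), where ψ is an automorphism of H, α : H → A is a homomorphism, and the A-component automorphism is the inversion a ↦ a⁻¹. Then Fix φ is finitely generated if and only if Fix ψ is finitely generated. -/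
open Subgroup

theorem Subgroup.eq_top_of_le_of_surjOn_mk {G : Type*} [Group G] {K C : Subgroup G} (hKC : K ≤ C)
    (hC : Set.SurjOn (QuotientGroup.mk : G → G ⧸ K) C Set.univ) : C = ⊤ := by
  refine eq_top_iff.2 fun g _ ↦ ?_
  obtain ⟨c, hc, hcg⟩ := hC (Set.mem_univ (g : G ⧸ K))
  have hcg : c⁻¹ * g ∈ C := hKC (QuotientGroup.eq.1 hcg)
  simpa using mul_mem hc hcg

theorem Group.fg_of_fg_of_finiteIndex {G : Type*} [Group G] (K : Subgroup G) [K.FiniteIndex]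
    [hK : Group.FG K] : Group.FG G := by
  obtain ⟨S, hS⟩ := (Group.fg_iff_subgroup_fg K).1 hK
  refine Group.fg_iff.2 ⟨S ∪ Set.range (fun q : G ⧸ K ↦ q.out), ?_,
    S.finite_toSet.union (Set.finite_range _)⟩
  refine eq_top_of_le_of_surjOn_mk (K := K) ?_ fun q _ ↦ ?_
  · exact hS.ge.trans (closure_mono Set.subset_union_left)
  · exact ⟨q.out, subset_closure (Or.inr ⟨q, rfl⟩), QuotientGroup.out_eq' q⟩

theorem Group.fg_of_fg_of_fg_quotient {G : Type*} [Group G] (N : Subgroup G) [N.Normal]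
    [hN : Group.FG N] [hQ : Group.FG (G ⧸ N)] : Group.FG G := by
  obtain ⟨S, hS⟩ := (Group.fg_iff_subgroup_fg N).1 hN
  obtain ⟨T, hT, hTfin⟩ := Group.fg_iff.1 hQ
  refine Group.fg_iff.2 ⟨S ∪ Quotient.out '' T, ?_, S.finite_toSet.union (hTfin.image _)⟩
  refine eq_top_of_le_of_surjOn_mk (K := N) ?_ fun q _ ↦ ?_
  · exact hS.ge.trans (closure_mono Set.subset_union_left)
  · have hT' : T ⊆ (closure (S ∪ Quotient.out '' T)).map (QuotientGroup.mk' N) :=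
      fun t ht ↦ ⟨t.out, subset_closure (Or.inr ⟨t, ht, rfl⟩), QuotientGroup.out_eq' t⟩
    rw [← closure_le, hT, top_le_iff] at hT'
    exact (SetLike.ext_iff.1 hT' q).2 (mem_top q)

theorem Subgroup.fg_iff_of_finiteIndex {G : Type*} [Group G] (K : Subgroup G) [K.FiniteIndex] :
    Group.FG K ↔ Group.FG G :=
  ⟨fun _ ↦ Group.fg_of_fg_of_finiteIndex K, fun _ ↦ K.fg_of_index_ne_zero⟩

instance Subgroup.finiteIndex_comap {G G' : Type*} [Group G] [Group G'] (f : G →* G')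
    (K : Subgroup G') [K.FiniteIndex] : (K.comap f).FiniteIndex := by
  have hK : K.relIndex ⊤ ≠ 0 := by
    rw [relIndex_top_right]
    exact FiniteIndex.index_ne_zero
  have := relIndex_comap_ne_zero f hK
  rw [comap_top, relIndex_top_right] at this
  exact ⟨this⟩

theorem MonoidHom.fg_iff_fg_range_of_finite_ker {G G' : Type*} [Group G] [Group G'] (f : G →* G')
    [Finite f.ker] : Group.FG G ↔ Group.FG f.range := by
  refine ⟨fun _ ↦ inferInstance, fun _ ↦ ?_⟩
  have : Group.FG (G ⧸ f.ker) := Group.fg_of_surjective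
    (f := (QuotientGroup.quotientKerEquivRange f).symm.toMonoidHom) (MulEquiv.surjective _)
  exact Group.fg_of_fg_of_fg_quotient f.ker

theorem MonoidHom.fg_iff_of_finite_ker_of_finiteIndex_range {G G' : Type*} [Group G] [Group G']
    (f : G →* G') [Finite f.ker] [f.range.FiniteIndex] : Group.FG G ↔ Group.FG G' :=
  f.fg_iff_fg_range_of_finite_ker.trans f.range.fg_iff_of_finiteIndex

theorem CommGroup.fg_subgroup {A : Type*} [CommGroup A] [Group.FG A] (B : Subgroup A) :
    Group.FG B := by
  have : Module.Finite ℤ (Additive A) := Module.Finite.iff_addGroup_fg.2 inferInstance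
  have : IsNoetherian ℤ (Additive A) := isNoetherian_of_isNoetherianRing_of_finite ℤ _
  rw [Group.fg_iff_subgroup_fg, Subgroup.fg_iff_add_fg]
  have hB := IsNoetherian.noetherian (AddSubgroup.toIntSubmodule B.toAddSubgroup)
  rwa [Submodule.fg_iff_addSubgroup_fg] at hB

theorem CommGroup.finite_ker_powMonoidHom {A : Type*} [CommGroup A] [Group.FG A] {n : ℕ}
    (hn : n ≠ 0) : Finite (powMonoidHom n : A →* A).ker := by
  have := CommGroup.fg_subgroup (powMonoidHom n : A →* A).ker
  refine CommGroup.finite_of_fg_isMulTorsion _ fun x ↦ ?_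
  exact isOfFinOrder_iff_pow_eq_one.2 ⟨n, Nat.pos_of_ne_zero hn, Subtype.ext x.2⟩

section InversionTwist

variable {H A : Type*} [Group H] [CommGroup A] {ψ : H ≃* H} {α : H →* A}
  {φ : (H × A) ≃* (H × A)}

theorem mem_fixedSubgroup_iff_of_inversion (hφ : ∀ h a, φ (h, a) = (ψ h, α h * a⁻¹))
    {x : H × A} : x ∈ fixedSubgroup φ ↔ x.1 ∈ fixedSubgroup ψ ∧ x.2 ^ 2 = α x.1 := by
  obtain ⟨h, a⟩ := x
  change φ (h, a) = (h, a) ↔ ψ h = h ∧ a ^ 2 = α h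
  rw [hφ, Prod.mk.injEq, mul_inv_eq_iff_eq_mul, sq, eq_comm (a := α h)]

variable (hφ : ∀ h a, φ (h, a) = (ψ h, α h * a⁻¹))

def fixedSubgroupFst : fixedSubgroup φ →* fixedSubgroup ψ :=
  ((MonoidHom.fst H A).comp (fixedSubgroup φ).subtype).codRestrict _
    fun x ↦ ((mem_fixedSubgroup_iff_of_inversion hφ).1 x.2).1

theorem range_fixedSubgroupFst :
    (fixedSubgroupFst hφ).range =
      ((powMonoidHom 2 : A →* A).range.comap α).subgroupOf (fixedSubgroup ψ) := by
  ext ⟨h, hh⟩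
  simp only [MonoidHom.mem_range, mem_subgroupOf, mem_comap, powMonoidHom_apply]
  constructor
  · rintro ⟨⟨⟨h', a⟩, hx⟩, hxh⟩
    cases congrArg Subtype.val hxh
    exact ⟨a, ((mem_fixedSubgroup_iff_of_inversion hφ).1 hx).2⟩
  · rintro ⟨a, ha⟩
    exact ⟨⟨(h, a), (mem_fixedSubgroup_iff_of_inversion hφ).2 ⟨hh, ha⟩⟩, rfl⟩

theorem finite_ker_fixedSubgroupFst [Group.FG A] : Finite (fixedSubgroupFst hφ).ker := by
  have fst_eq_one (x : (fixedSubgroupFst hφ).ker) : (x : fixedSubgroup φ).1.1 = 1 :=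
    congrArg Subtype.val x.2
  have snd_mem (x : (fixedSubgroupFst hφ).ker) :
      (x : fixedSubgroup φ).1.2 ∈ (powMonoidHom 2 : A →* A).ker := by
    rw [MonoidHom.mem_ker, powMonoidHom_apply,
      ((mem_fixedSubgroup_iff_of_inversion hφ).1 x.1.2).2, fst_eq_one, map_one]
  have := CommGroup.finite_ker_powMonoidHom (A := A) two_ne_zero
  refine Finite.of_injective (fun x ↦ (⟨_, snd_mem x⟩ : (powMonoidHom 2 : A →* A).ker)) ?_
  intro x y hxy
  exact Subtype.ext <| Subtype.ext <| Prod.ext ((fst_eq_one x).trans (fst_eq_one y).symm)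
    (congrArg Subtype.val hxy)

end InversionTwist

theorem fixed_fg_iff_of_gamma_inversion_general {H A : Type*} [Group H] [CommGroup A]
    (hA : Group.FG A)
    (ψ : H ≃* H) (α : H →* A) (φ : (H × A) ≃* (H × A))
    (hφ : ∀ (h : H) (a : A), φ (h, a) = (ψ h, α h * a⁻¹)) :
    Group.FG ↥(fixedSubgroup φ) ↔ Group.FG ↥(fixedSubgroup ψ) := by
  have := finite_ker_fixedSubgroupFst hφ
  have : (powMonoidHom 2 : A →* A).range.FiniteIndex :=
    finiteIndex_range_powMonoidHom_of_fg A two_ne_zero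
  have : (fixedSubgroupFst hφ).range.FiniteIndex := by
    rw [range_fixedSubgroupFst hφ]
    infer_instance
  exact (fixedSubgroupFst hφ).fg_iff_of_finite_ker_of_finiteIndex_range

/-- For `φ(h,a) = (ψ(h), α(h)·a⁻¹)` on `H × A` (so `γ` is the
inversion), `Fix φ` is finitely generated iff `Fix ψ` is finitely generated. -/
theorem fixed_fg_iff_of_gamma_inversion {H A : Type*} [Group H] [CommGroup A]
    (hHfg : Group.FG H) (hZ : Subgroup.center H = ⊥) (hA : Group.FG A)
    (ψ : H ≃* H) (α : H →* A) (φ : (H × A) ≃* (H × A))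
    (hφ : ∀ (h : H) (a : A), φ (h, a) = (ψ h, α h * a⁻¹)) :
    Group.FG ↥(fixedSubgroup φ) ↔ Group.FG ↥(fixedSubgroup ψ) :=
  fixed_fg_iff_of_gamma_inversion_general hA ψ α φ hφ
end
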